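/- arXiv:1905.02519 — 6 statements merged into one kernel-verified Lean document; each statement's English description precedes it below -/
import Mathlib

section
/- Let X = ⨆_{λ∈Λ} G_λ be a multiple conjugation quandle, R a ring, and (f₁, f₂) an MCQ Alexander pair of maps f₁, f₂ : X × X → R. Then for all x, y ∈ X, the element f₁(x,y) is invertible in R, and f₁(x,y)⁻¹ = f₁(x ◁ y, y⁻¹). -/
/-!
Right multiplication by `b` and by `b⁻¹` are mutually inverse actions on `X`, and `f₁` is a
cocycle for them: `f₁(x, ab) = f₁(x ◁ a, b) f₁(x, a)` with `f₁(x, e) = 1`. Taking `ab = e` in both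
orders exhibits `f₁(x ◁ b, b⁻¹)` as a two-sided inverse of `f₁(x, b)`.
-/

universe u v w x u' v'

/-- The raw data of a disjoint union of "groups" `G l` (with multiplication `mul`,
identity `one` and inversion `inv` on each component) together with a binary
operation `op` on the disjoint union `Σ l, G l`. -/
structure MCQData (Λ : Type u) (G : Λ → Type v) where
  mul : ∀ l : Λ, G l → G l → G l
  one : ∀ l : Λ, G l
  inv : ∀ l : Λ, G l → G l
  op  : (Σ l, G l) → (Σ l, G l) → (Σ l, G l)

namespace MCQData

variable {Λ : Type u} {G : Λ → Type v}

/-- Each component `G l` is a group with respect to the given data. -/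
def IsGroupData (D : MCQData Λ G) : Prop :=
  (∀ (l : Λ) (a b c : G l), D.mul l (D.mul l a b) c = D.mul l a (D.mul l b c)) ∧
  (∀ (l : Λ) (a : G l), D.mul l (D.one l) a = a) ∧
  (∀ (l : Λ) (a : G l), D.mul l a (D.one l) = a) ∧
  (∀ (l : Λ) (a : G l), D.mul l (D.inv l a) a = D.one l) ∧
  (∀ (l : Λ) (a : G l), D.mul l a (D.inv l a) = D.one l)

/-- `D` is a multiple conjugation quandle (MCQ): each component is a group,
the operation restricts to conjugation on each component, and the axioms of an
MCQ hold.  In the last axiom, `a ◁ x` and `b ◁ x` lie in a common component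
`G m` and `(ab) ◁ x = (a ◁ x)(b ◁ x)` there. -/
def IsMCQ (D : MCQData Λ G) : Prop :=
  D.IsGroupData ∧
  (∀ (l : Λ) (a b : G l),
    D.op ⟨l, a⟩ ⟨l, b⟩ = ⟨l, D.mul l (D.mul l (D.inv l b) a) b⟩) ∧
  (∀ (x : Σ l, G l) (l : Λ), D.op x ⟨l, D.one l⟩ = x) ∧
  (∀ (x : Σ l, G l) (l : Λ) (a b : G l),
    D.op x ⟨l, D.mul l a b⟩ = D.op (D.op x ⟨l, a⟩) ⟨l, b⟩) ∧
  (∀ x y z : Σ l, G l, D.op (D.op x y) z = D.op (D.op x z) (D.op y z)) ∧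
  (∀ (l : Λ) (a b : G l) (x : Σ l, G l), ∃ (m : Λ) (a' b' : G m),
    D.op ⟨l, a⟩ x = ⟨m, a'⟩ ∧ D.op ⟨l, b⟩ x = ⟨m, b'⟩ ∧
    D.op ⟨l, D.mul l a b⟩ x = ⟨m, D.mul m a' b'⟩)

/-- `(f₁, f₂)` is an MCQ Alexander pair for the MCQ `D` with values in the ring `R`. -/
def IsMCQAlexanderPair (D : MCQData Λ G) {R : Type w} [Ring R]
    (f₁ f₂ : (Σ l, G l) → (Σ l, G l) → R) : Prop :=
  (∀ (l : Λ) (a b : G l),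
    f₁ ⟨l, a⟩ ⟨l, b⟩ + f₂ ⟨l, a⟩ ⟨l, b⟩ = f₁ ⟨l, a⟩ ⟨l, D.mul l (D.inv l a) b⟩) ∧
  (∀ (l : Λ) (a b : G l) (x : Σ l, G l), f₁ ⟨l, a⟩ x = f₁ ⟨l, b⟩ x) ∧
  (∀ (l : Λ) (a b : G l) (x : Σ l, G l),
    f₂ ⟨l, D.mul l a b⟩ x =
      f₂ ⟨l, a⟩ x + f₁ (D.op ⟨l, b⟩ x) (D.op ⟨l, D.inv l a⟩ x) * f₂ ⟨l, b⟩ x) ∧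
  (∀ (x : Σ l, G l) (l : Λ), f₁ x ⟨l, D.one l⟩ = 1) ∧
  (∀ (x : Σ l, G l) (l : Λ) (a b : G l),
    f₁ x ⟨l, D.mul l a b⟩ = f₁ (D.op x ⟨l, a⟩) ⟨l, b⟩ * f₁ x ⟨l, a⟩) ∧
  (∀ (x : Σ l, G l) (l : Λ) (a b : G l),
    f₂ x ⟨l, D.mul l a b⟩ = f₁ (D.op x ⟨l, a⟩) ⟨l, b⟩ * f₂ x ⟨l, a⟩) ∧
  (∀ x y z : Σ l, G l, f₁ (D.op x y) z * f₁ x y = f₁ (D.op x z) (D.op y z) * f₁ x z) ∧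
  (∀ x y z : Σ l, G l, f₁ (D.op x y) z * f₂ x y = f₂ (D.op x z) (D.op y z) * f₁ y z) ∧
  (∀ x y z : Σ l, G l, f₂ (D.op x y) z =
    f₁ (D.op x z) (D.op y z) * f₂ x z + f₂ (D.op x z) (D.op y z) * f₂ y z)

/-- An MCQ homomorphism: `φ` preserves the operation `◁`, and for `a, b` in a common
component, `φ a`, `φ b` lie in a common component and `φ (ab) = (φ a)(φ b)`. -/
def IsMCQHom {Λ' : Type u'} {G' : Λ' → Type v'} (D : MCQData Λ G)
    (D' : MCQData Λ' G') (φ : (Σ l, G l) → (Σ l', G' l')) : Prop :=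
  (∀ x y : Σ l, G l, φ (D.op x y) = D'.op (φ x) (φ y)) ∧
  (∀ (l : Λ) (a b : G l), ∃ (m : Λ') (a' b' : G' m),
    φ ⟨l, a⟩ = ⟨m, a'⟩ ∧ φ ⟨l, b⟩ = ⟨m, b'⟩ ∧
    φ ⟨l, D.mul l a b⟩ = ⟨m, D'.mul m a' b'⟩)

/-- Conditions (0-i)--(0-iv) for the maps `f₃, f₄ : ⨆ (G l × G l) → R`. -/
def Conds0 (D : MCQData Λ G) {R : Type w} [Ring R]
    (f₃ f₄ : ∀ l : Λ, G l → G l → R) : Prop :=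
  (∀ (l : Λ) (a b : G l), IsUnit (f₃ l a b) ∧ IsUnit (f₄ l a b)) ∧
  (∀ (l : Λ) (a b c : G l), f₃ l (D.mul l a b) c * f₃ l a b = f₃ l a (D.mul l b c)) ∧
  (∀ (l : Λ) (a b c : G l),
    f₃ l (D.mul l a b) c * f₄ l a b = f₄ l a (D.mul l b c) * f₃ l b c) ∧
  (∀ (l : Λ) (a b c : G l), f₄ l (D.mul l a b) c = f₄ l a (D.mul l b c) * f₄ l b c)

/-- Conditions (0-i)--(4-iii) for the quadruple `(f₁, f₂, f₃, f₄)`.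
In conditions (4-i)--(4-iii), the decompositions `a ◁ x = ⟨m, a'⟩` and
`b ◁ x = ⟨m, b'⟩` express that `a ◁ x` and `b ◁ x` lie in a common component `G m`. -/
def Conds (D : MCQData Λ G) {R : Type w} [Ring R]
    (f₁ f₂ : (Σ l, G l) → (Σ l, G l) → R) (f₃ f₄ : ∀ l : Λ, G l → G l → R) : Prop :=
  Conds0 D f₃ f₄ ∧
  (∀ (l : Λ) (a b : G l),
    f₁ ⟨l, a⟩ ⟨l, b⟩ = f₄ l (D.inv l b) (D.mul l a b) * f₃ l a b) ∧
  (∀ (l : Λ) (a b : G l),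
    f₂ ⟨l, a⟩ ⟨l, b⟩ =
      -(f₃ l (D.inv l b) (D.mul l a b) * f₄ l (D.inv l b) (D.one l) * f₃ l b (D.inv l b)) +
        f₄ l (D.inv l b) (D.mul l a b) * f₄ l a b) ∧
  (∀ (x : Σ l, G l) (l : Λ), f₁ x ⟨l, D.one l⟩ = 1) ∧
  (∀ (x : Σ l, G l) (l : Λ) (a b : G l),
    f₁ x ⟨l, D.mul l a b⟩ = f₁ (D.op x ⟨l, a⟩) ⟨l, b⟩ * f₁ x ⟨l, a⟩) ∧
  (∀ (x : Σ l, G l) (l : Λ) (a b : G l),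
    f₂ x ⟨l, D.mul l a b⟩ * f₃ l a b = f₁ (D.op x ⟨l, a⟩) ⟨l, b⟩ * f₂ x ⟨l, a⟩) ∧
  (∀ (x : Σ l, G l) (l : Λ) (a b : G l),
    f₂ x ⟨l, D.mul l a b⟩ * f₄ l a b = f₂ (D.op x ⟨l, a⟩) ⟨l, b⟩) ∧
  (∀ x y z : Σ l, G l, f₁ (D.op x y) z * f₁ x y = f₁ (D.op x z) (D.op y z) * f₁ x z) ∧
  (∀ x y z : Σ l, G l, f₁ (D.op x y) z * f₂ x y = f₂ (D.op x z) (D.op y z) * f₁ y z) ∧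
  (∀ x y z : Σ l, G l, f₂ (D.op x y) z =
    f₁ (D.op x z) (D.op y z) * f₂ x z + f₂ (D.op x z) (D.op y z) * f₂ y z) ∧
  (∀ (l : Λ) (a b : G l) (x : Σ l, G l) (m : Λ) (a' b' : G m),
    D.op ⟨l, a⟩ x = ⟨m, a'⟩ → D.op ⟨l, b⟩ x = ⟨m, b'⟩ →
      f₁ ⟨l, D.mul l a b⟩ x * f₃ l a b = f₃ m a' b' * f₁ ⟨l, a⟩ x) ∧
  (∀ (l : Λ) (a b : G l) (x : Σ l, G l) (m : Λ) (a' b' : G m),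
    D.op ⟨l, a⟩ x = ⟨m, a'⟩ → D.op ⟨l, b⟩ x = ⟨m, b'⟩ →
      f₁ ⟨l, D.mul l a b⟩ x * f₄ l a b = f₄ m a' b' * f₁ ⟨l, b⟩ x) ∧
  (∀ (l : Λ) (a b : G l) (x : Σ l, G l) (m : Λ) (a' b' : G m),
    D.op ⟨l, a⟩ x = ⟨m, a'⟩ → D.op ⟨l, b⟩ x = ⟨m, b'⟩ →
      f₂ ⟨l, D.mul l a b⟩ x = f₃ m a' b' * f₂ ⟨l, a⟩ x + f₄ m a' b' * f₂ ⟨l, b⟩ x)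

/-- The multiplication `(a,u)(b,v) = (ab, f₃(a,b)u + f₄(a,b)v)` on `G l × M`. -/
def quadMul (D : MCQData Λ G) {R : Type w} [Ring R] (f₃ f₄ : ∀ l : Λ, G l → G l → R)
    (M : Type x) [AddCommGroup M] [Module R M] (l : Λ) (p q : G l × M) : G l × M :=
  (D.mul l p.1 q.1, f₃ l p.1 q.1 • p.2 + f₄ l p.1 q.1 • q.2)

/-- The operation `(x,u) ◁ (y,v) = (x ◁ y, f₁(x,y)u + f₂(x,y)v)` on `⨆ (G l × M)`. -/
def quadOp (D : MCQData Λ G) {R : Type w} [Ring R]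
    (f₁ f₂ : (Σ l, G l) → (Σ l, G l) → R) (M : Type x) [AddCommGroup M] [Module R M]
    (z w : Σ l, G l × M) : Σ l, G l × M :=
  ⟨(D.op ⟨z.1, z.2.1⟩ ⟨w.1, w.2.1⟩).1,
    ((D.op ⟨z.1, z.2.1⟩ ⟨w.1, w.2.1⟩).2,
      f₁ ⟨z.1, z.2.1⟩ ⟨w.1, w.2.1⟩ • z.2.2 + f₂ ⟨z.1, z.2.1⟩ ⟨w.1, w.2.1⟩ • w.2.2)⟩

/-- The data `X̃(f₁,f₂,f₃,f₄)` on `⨆ (G l × M)`. -/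
def quadExt (D : MCQData Λ G) {R : Type w} [Ring R]
    (f₁ f₂ : (Σ l, G l) → (Σ l, G l) → R) (f₃ f₄ : ∀ l : Λ, G l → G l → R)
    (M : Type x) [AddCommGroup M] [Module R M] : MCQData Λ (fun l => G l × M) where
  mul := quadMul D f₃ f₄ M
  one l := (D.one l, 0)
  inv l p := (D.inv l p.1, -((f₄ l (D.inv l p.1) (D.one l) * f₃ l p.1 (D.inv l p.1)) • p.2))
  op := quadOp D f₁ f₂ M

/-- The multiplication `(a,u)(b,v) = (ab, u + f₁(a,a⁻¹)v)` on `G l × M`. -/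
def alexMul (D : MCQData Λ G) {R : Type w} [Ring R]
    (f₁ : (Σ l, G l) → (Σ l, G l) → R) (M : Type x) [AddCommGroup M] [Module R M]
    (l : Λ) (p q : G l × M) : G l × M :=
  (D.mul l p.1 q.1, p.2 + f₁ ⟨l, p.1⟩ ⟨l, D.inv l p.1⟩ • q.2)

/-- The data `X̃(f₁,f₂)` on `⨆ (G l × M)`, with identity `(e_l, 0)` and
inverse `(a,u)⁻¹ = (a⁻¹, -f₁(a,a)u)` on each component. -/
def alexExt (D : MCQData Λ G) {R : Type w} [Ring R]
    (f₁ f₂ : (Σ l, G l) → (Σ l, G l) → R) (M : Type x) [AddCommGroup M] [Module R M] :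
    MCQData Λ (fun l => G l × M) where
  mul := alexMul D f₁ M
  one l := (D.one l, 0)
  inv l p := (D.inv l p.1, -(f₁ ⟨l, p.1⟩ ⟨l, p.1⟩ • p.2))
  op := quadOp D f₁ f₂ M

/-- `(m, o, i)` satisfies the group axioms on `α`. -/
def GroupAxiomsOn {α : Type x} (m : α → α → α) (o : α) (i : α → α) : Prop :=
  (∀ a b c : α, m (m a b) c = m a (m b c)) ∧ (∀ a : α, m o a = a) ∧ (∀ a : α, m a o = a) ∧
  (∀ a : α, m (i a) a = o) ∧ (∀ a : α, m a (i a) = o)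

/-- The relation `(f₁,f₂,f₃,f₄) ∼ (g₁,g₂,g₃,g₄)`, witnessed by a map `h : X → Rˣ`. -/
def QuadRel (D : MCQData Λ G) {R : Type w} [Ring R]
    (f₁ f₂ g₁ g₂ : (Σ l, G l) → (Σ l, G l) → R)
    (f₃ f₄ g₃ g₄ : ∀ l : Λ, G l → G l → R) : Prop :=
  ∃ h : (Σ l, G l) → Rˣ,
    (∀ x y : Σ l, G l, (h (D.op x y) : R) * f₁ x y = g₁ x y * (h x : R)) ∧
    (∀ x y : Σ l, G l, (h (D.op x y) : R) * f₂ x y = g₂ x y * (h y : R)) ∧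
    (∀ (l : Λ) (a b : G l),
      (h ⟨l, D.mul l a b⟩ : R) * f₃ l a b = g₃ l a b * (h ⟨l, a⟩ : R)) ∧
    (∀ (l : Λ) (a b : G l),
      (h ⟨l, D.mul l a b⟩ : R) * f₄ l a b = g₄ l a b * (h ⟨l, b⟩ : R))

section

variable {D : MCQData Λ G}

theorem IsMCQ.inv_mul (hD : D.IsMCQ) (l : Λ) (a : G l) : D.mul l (D.inv l a) a = D.one l :=
  hD.1.2.2.2.1 l a

theorem IsMCQ.mul_inv (hD : D.IsMCQ) (l : Λ) (a : G l) : D.mul l a (D.inv l a) = D.one l :=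
  hD.1.2.2.2.2 l a

theorem IsMCQ.op_op_inv (hD : D.IsMCQ) (x : Σ l, G l) (l : Λ) (b : G l) :
    D.op (D.op x ⟨l, b⟩) ⟨l, D.inv l b⟩ = x := by
  rw [← hD.2.2.2.1, hD.mul_inv, hD.2.2.1]

theorem IsMCQAlexanderPair.f₁_op_mul_f₁_eq_one {R : Type w} [Ring R]
    {f₁ f₂ : (Σ l, G l) → (Σ l, G l) → R} (hf : D.IsMCQAlexanderPair f₁ f₂)
    (x : Σ l, G l) {l : Λ} {a b : G l} (hab : D.mul l a b = D.one l) :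
    f₁ (D.op x ⟨l, a⟩) ⟨l, b⟩ * f₁ x ⟨l, a⟩ = 1 := by
  rw [← hf.2.2.2.2.1, hab, hf.2.2.2.1]

end

end MCQData

/-- for an MCQ Alexander pair `(f₁, f₂)`, the element `f₁(x,y)` is
invertible with inverse `f₁(x ◁ y, y⁻¹)`. -/
theorem alexander_pair_f1_invertible {Λ : Type u} {G : Λ → Type v} {R : Type w} [Ring R]
    (D : MCQData Λ G) (hD : D.IsMCQ)
    (f₁ f₂ : (Σ l, G l) → (Σ l, G l) → R) (hf : D.IsMCQAlexanderPair f₁ f₂) :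
    ∀ (x : Σ l, G l) (l : Λ) (b : G l),
      IsUnit (f₁ x ⟨l, b⟩) ∧
      f₁ x ⟨l, b⟩ * f₁ (D.op x ⟨l, b⟩) ⟨l, D.inv l b⟩ = 1 ∧
      f₁ (D.op x ⟨l, b⟩) ⟨l, D.inv l b⟩ * f₁ x ⟨l, b⟩ = 1 := by
  intro x l b
  have left_inv := hf.f₁_op_mul_f₁_eq_one x (hD.mul_inv l b)
  have right_inv : f₁ x ⟨l, b⟩ * f₁ (D.op x ⟨l, b⟩) ⟨l, D.inv l b⟩ = 1 := by
    simpa only [hD.op_op_inv] using hf.f₁_op_mul_f₁_eq_one (D.op x ⟨l, b⟩) (hD.inv_mul l b)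
  exact ⟨⟨⟨_, _, right_inv, left_inv⟩, rfl⟩, right_inv, left_inv⟩
end

section
/- Let X = ⨆_{λ∈Λ} G_λ be a multiple conjugation quandle, R a ring, and (f₁, f₂) an MCQ Alexander pair of maps f₁, f₂ : X × X → R. Then for all λ ∈ Λ, all a, b ∈ G_λ and all x ∈ X, f₁(ab, x) f₁(a, a⁻¹) = f₁(b ◁ x, a⁻¹ ◁ x) f₁(b, x). -/
universe u v w x u' v'

/- Condition (iv) at `(b, a⁻¹, x)` gives the identity with `b ◁ a⁻¹ = a b a⁻¹` in place of `ab`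
and `b` in place of `a`; both pairs lie in `G_l`, and by (ii) `f₁` sees its first argument only
through its component. -/
/-- for an MCQ Alexander pair `(f₁, f₂)`,
`f₁(ab, x) f₁(a, a⁻¹) = f₁(b ◁ x, a⁻¹ ◁ x) f₁(b, x)`. -/
theorem alexander_pair_f1_mul {Λ : Type u} {G : Λ → Type v} {R : Type w} [Ring R]
    (D : MCQData Λ G) (hD : D.IsMCQ)
    (f₁ f₂ : (Σ l, G l) → (Σ l, G l) → R) (hf : D.IsMCQAlexanderPair f₁ f₂) :
    ∀ (l : Λ) (a b : G l) (x : Σ l, G l),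
      f₁ ⟨l, D.mul l a b⟩ x * f₁ ⟨l, a⟩ ⟨l, D.inv l a⟩ =
        f₁ (D.op ⟨l, b⟩ x) (D.op ⟨l, D.inv l a⟩ x) * f₁ ⟨l, b⟩ x := by
  obtain ⟨-, hop_conj, -⟩ := hD
  obtain ⟨-, hf₁_component, -, -, -, -, hf₁_op, -⟩ := hf
  intro l a b x
  calc f₁ ⟨l, D.mul l a b⟩ x * f₁ ⟨l, a⟩ ⟨l, D.inv l a⟩
      = f₁ (D.op ⟨l, b⟩ ⟨l, D.inv l a⟩) x * f₁ ⟨l, b⟩ ⟨l, D.inv l a⟩ := by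
        rw [hop_conj, hf₁_component l b a,
          hf₁_component l (D.mul l (D.mul l (D.inv l (D.inv l a)) b) (D.inv l a)) (D.mul l a b)]
    _ = f₁ (D.op ⟨l, b⟩ x) (D.op ⟨l, D.inv l a⟩ x) * f₁ ⟨l, b⟩ x := hf₁_op _ _ _
end

section
/- Let X = ⨆_{λ∈Λ} G_λ be a multiple conjugation quandle, R a ring, and (f₁, f₂) an MCQ Alexander pair of maps f₁, f₂ : X × X → R. Then for all λ ∈ Λ, all a, b ∈ G_λ and all x ∈ X, f₂(x ◁ a, b) = f₂(x, ab) f₁(a, a⁻¹). -/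
universe u v w x u' v'

/-!
Conjugating `ab` by `a` gives `ba`, so relation (iv) for the triple `(x, ab, a)`, with `f₂(x ◁ a, ba)`
expanded by (iii), reads `f₁(y, a) f₂(x, ab) = f₁(y, a) f₂(x ◁ a, b) f₁(a, a)` for
`y = (x ◁ a) ◁ b`. By (iii) every `f₁(y, a)` has the left inverse `f₁(y ◁ a, a⁻¹)`, and by (ii)
and (iii) `f₁(a, a)` has the right inverse `f₁(a, a⁻¹)`; cancelling both gives the claim.
-/

namespace MCQData

variable {Λ : Type u} {G : Λ → Type v} {D : MCQData Λ G}

namespace IsMCQ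

variable (hD : D.IsMCQ)
include hD

theorem mul_inv_cancel (l : Λ) (a : G l) : D.mul l a (D.inv l a) = D.one l :=
  hD.1.2.2.2.2 l a

theorem inv_mul_cancel (l : Λ) (a : G l) : D.mul l (D.inv l a) a = D.one l :=
  hD.1.2.2.2.1 l a

theorem inv_mul_cancel_left (l : Λ) (a b : G l) : D.mul l (D.inv l a) (D.mul l a b) = b := by
  rw [← hD.1.1, hD.inv_mul_cancel, hD.1.2.1]

theorem op_mk_mk (l : Λ) (a b : G l) :
    D.op ⟨l, a⟩ ⟨l, b⟩ = ⟨l, D.mul l (D.mul l (D.inv l b) a) b⟩ :=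
  hD.2.1 l a b

theorem op_mul (x : Σ l, G l) (l : Λ) (a b : G l) :
    D.op x ⟨l, D.mul l a b⟩ = D.op (D.op x ⟨l, a⟩) ⟨l, b⟩ :=
  hD.2.2.2.1 x l a b

theorem op_mk_mul_self (l : Λ) (a b : G l) : D.op ⟨l, D.mul l a b⟩ ⟨l, a⟩ = ⟨l, D.mul l b a⟩ := by
  rw [hD.op_mk_mk, hD.inv_mul_cancel_left]

end IsMCQ

namespace IsMCQAlexanderPair

variable {R : Type w} [Ring R] {f₁ f₂ : (Σ l, G l) → (Σ l, G l) → R}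
  (hf : D.IsMCQAlexanderPair f₁ f₂)
include hf

theorem f₁_mk_congr (l : Λ) (a b : G l) (x : Σ l, G l) : f₁ ⟨l, a⟩ x = f₁ ⟨l, b⟩ x :=
  hf.2.1 l a b x

theorem f₁_one (x : Σ l, G l) (l : Λ) : f₁ x ⟨l, D.one l⟩ = 1 :=
  hf.2.2.2.1 x l

theorem f₁_mul (x : Σ l, G l) (l : Λ) (a b : G l) :
    f₁ x ⟨l, D.mul l a b⟩ = f₁ (D.op x ⟨l, a⟩) ⟨l, b⟩ * f₁ x ⟨l, a⟩ :=
  hf.2.2.2.2.1 x l a b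

theorem f₂_mul (x : Σ l, G l) (l : Λ) (a b : G l) :
    f₂ x ⟨l, D.mul l a b⟩ = f₁ (D.op x ⟨l, a⟩) ⟨l, b⟩ * f₂ x ⟨l, a⟩ :=
  hf.2.2.2.2.2.1 x l a b

theorem f₁_op_mul_f₂ (x y z : Σ l, G l) :
    f₁ (D.op x y) z * f₂ x y = f₂ (D.op x z) (D.op y z) * f₁ y z :=
  hf.2.2.2.2.2.2.2.1 x y z

variable (hD : D.IsMCQ)
include hD

theorem f₁_op_inv_mul_f₁ (x : Σ l, G l) (l : Λ) (a : G l) :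
    f₁ (D.op x ⟨l, a⟩) ⟨l, D.inv l a⟩ * f₁ x ⟨l, a⟩ = 1 := by
  rw [← hf.f₁_mul, hD.mul_inv_cancel, hf.f₁_one]

theorem isLeftRegular_f₁ (x : Σ l, G l) (l : Λ) (a : G l) : IsLeftRegular (f₁ x ⟨l, a⟩) :=
  isLeftRegular_of_mul_eq_one (hf.f₁_op_inv_mul_f₁ hD x l a)

theorem f₁_self_mul_f₁_inv (l : Λ) (a : G l) :
    f₁ ⟨l, a⟩ ⟨l, a⟩ * f₁ ⟨l, a⟩ ⟨l, D.inv l a⟩ = 1 := by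
  have h := hf.f₁_mul ⟨l, a⟩ l (D.inv l a) a
  rw [hD.inv_mul_cancel, hf.f₁_one, hD.op_mk_mk, hf.f₁_mk_congr l _ a] at h
  exact h.symm

theorem f₂_mul_eq_f₂_op_mul_f₁_self (x : Σ l, G l) (l : Λ) (a b : G l) :
    f₂ x ⟨l, D.mul l a b⟩ = f₂ (D.op x ⟨l, a⟩) ⟨l, b⟩ * f₁ ⟨l, a⟩ ⟨l, a⟩ := by
  apply hf.isLeftRegular_f₁ hD (D.op (D.op x ⟨l, a⟩) ⟨l, b⟩) l a
  calc f₁ (D.op (D.op x ⟨l, a⟩) ⟨l, b⟩) ⟨l, a⟩ * f₂ x ⟨l, D.mul l a b⟩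
      = f₂ (D.op x ⟨l, a⟩) ⟨l, D.mul l b a⟩ * f₁ ⟨l, D.mul l a b⟩ ⟨l, a⟩ := by
        rw [← hD.op_mul, hf.f₁_op_mul_f₂, hD.op_mk_mul_self]
    _ = f₁ (D.op (D.op x ⟨l, a⟩) ⟨l, b⟩) ⟨l, a⟩ *
          (f₂ (D.op x ⟨l, a⟩) ⟨l, b⟩ * f₁ ⟨l, a⟩ ⟨l, a⟩) := by
        rw [hf.f₂_mul, hf.f₁_mk_congr l _ a, mul_assoc]

end IsMCQAlexanderPair

end MCQData

/-- for an MCQ Alexander pair `(f₁, f₂)`,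
`f₂(x ◁ a, b) = f₂(x, ab) f₁(a, a⁻¹)`. -/
theorem alexander_pair_f2_op {Λ : Type u} {G : Λ → Type v} {R : Type w} [Ring R]
    (D : MCQData Λ G) (hD : D.IsMCQ)
    (f₁ f₂ : (Σ l, G l) → (Σ l, G l) → R) (hf : D.IsMCQAlexanderPair f₁ f₂) :
    ∀ (l : Λ) (a b : G l) (x : Σ l, G l),
      f₂ (D.op x ⟨l, a⟩) ⟨l, b⟩ = f₂ x ⟨l, D.mul l a b⟩ * f₁ ⟨l, a⟩ ⟨l, D.inv l a⟩ := by
  intro l a b x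
  rw [hf.f₂_mul_eq_f₂_op_mul_f₁_self hD, mul_assoc, hf.f₁_self_mul_f₁_inv hD, mul_one]
end

section
/- Let X = ⨆_{λ∈Λ} G_λ be a multiple conjugation quandle, R a ring, and (f₁, f₂) an MCQ Alexander pair of maps f₁, f₂ : X × X → R. Then for every left R-module M, the set X̃(f₁,f₂) = ⨆_{λ∈Λ} (G_λ × M) with operations (x,u) ◁ (y,v) = (x ◁ y, f₁(x,y)u + f₂(x,y)v) and, on each G_λ × M, (a,u)(b,v) = (ab, u + f₁(a,a⁻¹)v), is a multiple conjugation quandle; moreover the identity of G_λ × M is (e_λ, 0) and the inverse of (a,u) is (a⁻¹, −f₁(a,a)u). -/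
universe u v w x u' v'

/-! In its first coordinate each MCQ axiom of `X̃(f₁,f₂)` is the same axiom of `X`; in the
module coordinate it is an identity between coefficients built from `f₁` and `f₂`. Apart from
conditions (i)–(iv) themselves, these identities use that `f₁(a, ·)` depends only on the component
of `a` and is anti-multiplicative on it (so that `f₁(a, a⁻¹)` inverts `f₁(a, a)`), and that
`f₂(x ◁ a, b) = f₂(x, ab) f₁(a, a⁻¹)`. -/

namespace MCQData

variable {Λ : Type u} {G : Λ → Type v} {D : MCQData Λ G}

theorem sigma_prod_mk_congr {M : Type x} {s t : Σ l, G l} (h : s = t) {u v : M} (huv : u = v) :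
    (⟨s.1, (s.2, u)⟩ : Σ l, G l × M) = ⟨t.1, (t.2, v)⟩ := by
  subst h huv; rfl

namespace IsGroupData

variable (hG : D.IsGroupData) (l : Λ)

abbrev group : Group (G l) where
  mul := D.mul l
  one := D.one l
  inv := D.inv l
  mul_assoc := hG.1 l
  one_mul := hG.2.1 l
  mul_one := hG.2.2.1 l
  inv_mul_cancel := hG.2.2.2.1 l

include hG

theorem inv_one : D.inv l (D.one l) = D.one l := by
  let _ := hG.group l; exact _root_.inv_one

theorem inv_inv (a : G l) : D.inv l (D.inv l a) = a := by
  let _ := hG.group l; exact _root_.inv_inv a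

theorem mul_inv_rev (a b : G l) : D.inv l (D.mul l a b) = D.mul l (D.inv l b) (D.inv l a) := by
  let _ := hG.group l; exact _root_.mul_inv_rev a b

theorem inv_mul_mul_mul_inv_mul (a b : G l) :
    D.mul l (D.mul l (D.inv l a) (D.mul l (D.mul l a b) (D.inv l a))) a = b := by
  let _ := hG.group l; exact (show a⁻¹ * (a * b * a⁻¹) * a = b by group)

theorem eq_one_of_mul_self {a : G l} (h : D.mul l a a = a) : a = D.one l := by
  let _ := hG.group l; exact mul_eq_left.mp h

theorem eq_inv_of_mul_eq_one {a b : G l} (h : D.mul l a b = D.one l) : b = D.inv l a := by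
  let _ := hG.group l; exact eq_inv_of_mul_eq_one_right h

end IsGroupData

namespace IsMCQ

variable (hD : D.IsMCQ)
include hD

theorem op_one_eq (l : Λ) (x : Σ l, G l) : ∃ m, D.op ⟨l, D.one l⟩ x = ⟨m, D.one m⟩ := by
  have ⟨⟨_, hone_mul, _⟩, _, _, _, _, hcommon⟩ := hD
  obtain ⟨m, p, q, hp, hq, hpq⟩ := hcommon l (D.one l) (D.one l) x
  obtain rfl : p = q := sigma_mk_injective (hp.symm.trans hq)
  rw [hone_mul] at hpq
  have hpp : D.mul m p p = p := sigma_mk_injective (hpq.symm.trans hp)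
  exact ⟨m, by rw [hp, hD.1.eq_one_of_mul_self m hpp]⟩

theorem op_inv {l m : Λ} {a : G l} {x : Σ l, G l} {a' : G m} (h : D.op ⟨l, a⟩ x = ⟨m, a'⟩) :
    D.op ⟨l, D.inv l a⟩ x = ⟨m, D.inv m a'⟩ := by
  have ⟨⟨_, _, _, _, hmul_inv⟩, _, _, _, _, hcommon⟩ := hD
  obtain ⟨m', p, q, hp, hq, hpq⟩ := hcommon l a (D.inv l a) x
  obtain ⟨rfl, hpa⟩ := Sigma.mk.inj_iff.mp (hp.symm.trans h)
  obtain rfl := eq_of_heq hpa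
  obtain ⟨n, hn⟩ := hD.op_one_eq l x
  rw [hmul_inv, hn] at hpq
  obtain ⟨rfl, hpq⟩ := Sigma.mk.inj_iff.mp hpq
  rw [hq, hD.1.eq_inv_of_mul_eq_one n (eq_of_heq hpq).symm]

end IsMCQ

/-! In the proofs below, `hi`, `hii₁`, …, `hiv₃` are the conditions (i)–(iv) of an MCQ
Alexander pair, in the order in which they are stated. -/

section AlexanderPair

variable {R : Type w} [Ring R] {f₁ f₂ : (Σ l, G l) → (Σ l, G l) → R}
  (hD : D.IsMCQ) (hf : D.IsMCQAlexanderPair f₁ f₂)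
include hD hf

theorem f₁_mk_mul (l : Λ) (c a b : G l) :
    f₁ ⟨l, c⟩ ⟨l, D.mul l a b⟩ = f₁ ⟨l, c⟩ ⟨l, b⟩ * f₁ ⟨l, c⟩ ⟨l, a⟩ := by
  have ⟨_, hconj, _⟩ := hD
  have ⟨_, hii₁, _, _, hiii₂, _⟩ := hf
  rw [hiii₂, hconj l c a, hii₁ l _ c]

theorem f₁_op_inv_mul_f₁ (x : Σ l, G l) (l : Λ) (a : G l) :
    f₁ (D.op x ⟨l, D.inv l a⟩) ⟨l, a⟩ * f₁ x ⟨l, D.inv l a⟩ = 1 := by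
  have ⟨⟨_, _, _, hinv_mul, _⟩, _⟩ := hD
  have ⟨_, _, _, hiii₁, hiii₂, _⟩ := hf
  rw [← hiii₂, hinv_mul, hiii₁]

theorem f₁_mul_f₁_inv (l : Λ) (c a : G l) :
    f₁ ⟨l, c⟩ ⟨l, a⟩ * f₁ ⟨l, c⟩ ⟨l, D.inv l a⟩ = 1 := by
  have ⟨⟨_, _, _, hinv_mul, _⟩, _⟩ := hD
  rw [← f₁_mk_mul hD hf, hinv_mul, hf.2.2.2.1]

theorem f₁_inv_mul_f₁ (l : Λ) (c a : G l) :
    f₁ ⟨l, c⟩ ⟨l, D.inv l a⟩ * f₁ ⟨l, c⟩ ⟨l, a⟩ = 1 := by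
  have ⟨⟨_, _, _, _, hmul_inv⟩, _⟩ := hD
  rw [← f₁_mk_mul hD hf, hmul_inv, hf.2.2.2.1]

theorem f₁_mul_inv (l : Λ) (a b : G l) :
    f₁ ⟨l, D.mul l a b⟩ ⟨l, D.inv l (D.mul l a b)⟩ =
      f₁ ⟨l, a⟩ ⟨l, D.inv l a⟩ * f₁ ⟨l, b⟩ ⟨l, D.inv l b⟩ := by
  rw [hD.1.mul_inv_rev, f₁_mk_mul hD hf, hf.2.1 l _ a, hf.2.1 l (D.mul l a b) b]

theorem f₂_op_mk (x : Σ l, G l) (l : Λ) (a b : G l) :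
    f₂ (D.op x ⟨l, a⟩) ⟨l, b⟩ = f₂ x ⟨l, D.mul l a b⟩ * f₁ ⟨l, a⟩ ⟨l, D.inv l a⟩ := by
  have ⟨_, hconj, _, hop_mul, _⟩ := hD
  have ⟨_, hii₁, _, _, _, hiii₃, _, hiv₂, _⟩ := hf
  -- The second identity of (iv) for `y = (ab)a⁻¹`, whose conjugate by `a` is `b`.
  set y := D.mul l (D.mul l a b) (D.inv l a)
  have hya : D.op ⟨l, y⟩ ⟨l, a⟩ = ⟨l, b⟩ := by
    rw [hconj, hD.1.inv_mul_mul_mul_inv_mul]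
  have h := hiv₂ x ⟨l, y⟩ ⟨l, a⟩
  rw [hya, hii₁ l y a, hop_mul x l (D.mul l a b), hiii₃ x l (D.mul l a b),
    ← mul_assoc, f₁_op_inv_mul_f₁ hD hf, one_mul] at h
  rw [h, mul_assoc, f₁_mul_f₁_inv hD hf, mul_one]

theorem f₁_mul_f₁_mk_inv_comm {l m : Λ} (a b : G l) {x : Σ l, G l} {a' : G m}
    (h : D.op ⟨l, a⟩ x = ⟨m, a'⟩) :
    f₁ ⟨l, b⟩ x * f₁ ⟨l, a⟩ ⟨l, D.inv l a⟩ = f₁ ⟨m, a'⟩ ⟨m, D.inv m a'⟩ * f₁ ⟨l, b⟩ x := by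
  have ⟨_, hii₁, _, _, _, _, hiv₁, _⟩ := hf
  have h₁ := hiv₁ ⟨l, a⟩ ⟨l, D.inv l a⟩ x
  rwa [hD.2.1 l a, hii₁ l _ b x, h, hD.op_inv h, hii₁ l a b x] at h₁

variable (M : Type x) [AddCommGroup M] [Module R M]

theorem alexExt_isGroupData : (alexExt D f₁ f₂ M).IsGroupData := by
  have ⟨hassoc, hone_mul, hmul_one, hinv_mul, hmul_inv⟩ := hD.1
  refine ⟨?_, ?_, ?_, ?_, ?_⟩
  · rintro l ⟨a, u⟩ ⟨b, v⟩ ⟨c, w⟩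
    refine Prod.ext (hassoc l a b c) ?_
    dsimp only [alexExt, alexMul]
    rw [f₁_mul_inv hD hf, mul_smul, smul_add, add_assoc]
  · rintro l ⟨a, u⟩
    refine Prod.ext (hone_mul l a) ?_
    dsimp only [alexExt, alexMul]
    rw [hD.1.inv_one, hf.2.2.2.1, one_smul, zero_add]
  · rintro l ⟨a, u⟩
    refine Prod.ext (hmul_one l a) ?_
    dsimp only [alexExt, alexMul]
    rw [smul_zero, add_zero]
  · rintro l ⟨a, u⟩
    refine Prod.ext (hinv_mul l a) ?_
    dsimp only [alexExt, alexMul]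
    rw [hD.1.inv_inv, hf.2.1 l (D.inv l a) a, neg_add_cancel]
  · rintro l ⟨a, u⟩
    refine Prod.ext (hmul_inv l a) ?_
    dsimp only [alexExt, alexMul]
    rw [smul_neg, ← mul_smul, f₁_inv_mul_f₁ hD hf, one_smul, add_neg_cancel]

theorem alexExt_op_mk_mk (l : Λ) (p q : G l × M) :
    (alexExt D f₁ f₂ M).op ⟨l, p⟩ ⟨l, q⟩ = ⟨l, (alexExt D f₁ f₂ M).mul l
      ((alexExt D f₁ f₂ M).mul l ((alexExt D f₁ f₂ M).inv l q) p) q⟩ := by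
  have ⟨hi, hii₁, _⟩ := hf
  obtain ⟨a, u⟩ := p
  obtain ⟨b, v⟩ := q
  -- By (ii) every `f₁ ⟨l, c⟩ _` below equals `f₁ ⟨l, a⟩ _`, and then (i) gives the identity.
  have hf₂ : f₂ ⟨l, a⟩ ⟨l, b⟩ = f₁ ⟨l, a⟩ ⟨l, D.mul l (D.inv l a) b⟩ - f₁ ⟨l, a⟩ ⟨l, b⟩ :=
    eq_sub_of_add_eq' (hi l a b)
  refine sigma_prod_mk_congr (hD.2.1 l a b) ?_
  dsimp only [alexExt, alexMul]
  rw [hD.1.inv_inv, hD.1.mul_inv_rev, hD.1.inv_inv, hii₁ l (D.inv l b) a,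
    hii₁ l (D.mul l (D.inv l b) a) a, hii₁ l b a, hf₂, sub_smul]
  abel

theorem alexExt_op_one (y : Σ l, G l × M) (l : Λ) :
    (alexExt D f₁ f₂ M).op y ⟨l, (alexExt D f₁ f₂ M).one l⟩ = y := by
  obtain ⟨k, c, w⟩ := y
  refine sigma_prod_mk_congr (hD.2.2.1 ⟨k, c⟩ l) ?_
  dsimp only [alexExt, quadOp]
  rw [hf.2.2.2.1, one_smul, smul_zero, add_zero]

theorem alexExt_op_mul (y : Σ l, G l × M) (l : Λ) (p q : G l × M) :
    (alexExt D f₁ f₂ M).op y ⟨l, (alexExt D f₁ f₂ M).mul l p q⟩ =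
      (alexExt D f₁ f₂ M).op ((alexExt D f₁ f₂ M).op y ⟨l, p⟩) ⟨l, q⟩ := by
  have ⟨_, _, _, _, hiii₂, hiii₃, _⟩ := hf
  obtain ⟨k, c, u⟩ := y
  obtain ⟨a, v⟩ := p
  obtain ⟨b, w⟩ := q
  refine sigma_prod_mk_congr (hD.2.2.2.1 ⟨k, c⟩ l a b) ?_
  dsimp only [alexExt, alexMul, quadOp]
  rw [hiii₂ ⟨k, c⟩ l a b, f₂_op_mk hD hf ⟨k, c⟩ l a b, hiii₃ ⟨k, c⟩ l a b]
  simp only [smul_add, mul_smul, add_assoc]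

theorem alexExt_op_op (y z t : Σ l, G l × M) :
    (alexExt D f₁ f₂ M).op ((alexExt D f₁ f₂ M).op y z) t =
      (alexExt D f₁ f₂ M).op ((alexExt D f₁ f₂ M).op y t) ((alexExt D f₁ f₂ M).op z t) := by
  have ⟨_, _, _, _, _, _, hiv₁, hiv₂, hiv₃⟩ := hf
  obtain ⟨k₁, p, u⟩ := y
  obtain ⟨k₂, q, v⟩ := z
  obtain ⟨k₃, r, w⟩ := t
  refine sigma_prod_mk_congr (hD.2.2.2.2.1 ⟨k₁, p⟩ ⟨k₂, q⟩ ⟨k₃, r⟩) ?_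
  dsimp only [alexExt, quadOp]
  simp only [Sigma.eta, smul_add, smul_smul]
  rw [hiv₁ ⟨k₁, p⟩ ⟨k₂, q⟩ ⟨k₃, r⟩, hiv₂ ⟨k₁, p⟩ ⟨k₂, q⟩ ⟨k₃, r⟩,
    hiv₃ ⟨k₁, p⟩ ⟨k₂, q⟩ ⟨k₃, r⟩, add_smul]
  abel

theorem alexExt_op_mul_common (l : Λ) (p q : G l × M) (y : Σ l, G l × M) :
    ∃ (m : Λ) (p' q' : G m × M),
      (alexExt D f₁ f₂ M).op ⟨l, p⟩ y = ⟨m, p'⟩ ∧ (alexExt D f₁ f₂ M).op ⟨l, q⟩ y = ⟨m, q'⟩ ∧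
      (alexExt D f₁ f₂ M).op ⟨l, (alexExt D f₁ f₂ M).mul l p q⟩ y =
        ⟨m, (alexExt D f₁ f₂ M).mul m p' q'⟩ := by
  have ⟨_, hii₁, hii₂, _⟩ := hf
  obtain ⟨a, u⟩ := p
  obtain ⟨b, v⟩ := q
  obtain ⟨k, c, w⟩ := y
  obtain ⟨m, a', b', ha, hb, hab⟩ := hD.2.2.2.2.2 l a b ⟨k, c⟩
  refine ⟨m, (a', f₁ ⟨l, a⟩ ⟨k, c⟩ • u + f₂ ⟨l, a⟩ ⟨k, c⟩ • w),
    (b', f₁ ⟨l, b⟩ ⟨k, c⟩ • v + f₂ ⟨l, b⟩ ⟨k, c⟩ • w),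
    sigma_prod_mk_congr ha rfl, sigma_prod_mk_congr hb rfl, sigma_prod_mk_congr hab ?_⟩
  have hf₂ : f₂ ⟨l, D.mul l a b⟩ ⟨k, c⟩ =
      f₂ ⟨l, a⟩ ⟨k, c⟩ + f₁ ⟨m, a'⟩ ⟨m, D.inv m a'⟩ * f₂ ⟨l, b⟩ ⟨k, c⟩ := by
    rw [hii₂, hb, hD.op_inv ha, hii₁ m b' a']
  dsimp only [alexExt, alexMul]
  rw [hf₂, hii₁ l (D.mul l a b) b ⟨k, c⟩, hii₁ l a b ⟨k, c⟩]
  simp only [smul_add, smul_smul, add_smul]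
  rw [f₁_mul_f₁_mk_inv_comm hD hf a b ha]
  abel

end AlexanderPair

end MCQData

/-- for an MCQ Alexander pair `(f₁, f₂)` and any left `R`-module `M`,
`X̃(f₁,f₂) = ⨆ (G l × M)` with `(x,u) ◁ (y,v) = (x ◁ y, f₁(x,y)u + f₂(x,y)v)` and
`(a,u)(b,v) = (ab, u + f₁(a,a⁻¹)v)` is an MCQ; its data includes the identity
`(e_λ, 0)` and the inverse `(a,u)⁻¹ = (a⁻¹, -f₁(a,a)u)` on each component. -/
theorem alexander_pair_gives_mcq {Λ : Type u} {G : Λ → Type v} {R : Type w} [Ring R]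
    (D : MCQData Λ G) (hD : D.IsMCQ)
    (f₁ f₂ : (Σ l, G l) → (Σ l, G l) → R) (hf : D.IsMCQAlexanderPair f₁ f₂)
    (M : Type x) [AddCommGroup M] [Module R M] :
    (MCQData.alexExt D f₁ f₂ M).IsMCQ :=
  ⟨MCQData.alexExt_isGroupData hD hf M, MCQData.alexExt_op_mk_mk hD hf M,
    MCQData.alexExt_op_one hD hf M, MCQData.alexExt_op_mul hD hf M,
    MCQData.alexExt_op_op hD hf M, MCQData.alexExt_op_mul_common hD hf M⟩
end

section
/- Let X = ⨆_{λ∈Λ} G_λ be a multiple conjugation quandle, R a ring, and f₃, f₄ : ⨆_{λ∈Λ} (G_λ × G_λ) → R maps. Then f₃ and f₄ satisfy conditions (0-i)–(0-iv) if and only if, for each λ ∈ Λ and every left R-module M, the set G_λ × M with multiplication (a,u)(b,v) = (ab, f₃(a,b)u + f₄(a,b)v) is a group; in that case the identity of G_λ × M is (e_λ, 0) and the inverse of (a,u) is (a⁻¹, −f₄(a⁻¹,e_λ)f₃(a,a⁻¹)u). -/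
universe u v w x u' v'

/-!
Associativity of `(a,u)(b,v) = (ab, f₃(a,b)u + f₄(a,b)v)`, compared coefficientwise in `u, v, w`,
is exactly (0-ii)–(0-iv). Given these cocycle identities, (0-i) is equivalent to the
normalisation `f₃(a,e) = 1 = f₄(e,a)`: a unit that is idempotent is `1`, and conversely
`f₃(ab,b⁻¹)` and `f₄(a⁻¹,ab)` are two-sided inverses of `f₃(a,b)` and `f₄(a,b)`. The
normalisation is what a neutral element of `G × R` forces, and it makes `(e,0)` neutral and
`(a⁻¹, -f₄(a⁻¹,e)f₃(a,a⁻¹)u)` inverse to `(a,u)` in every `G × M`.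
-/

namespace MCQData

section TwistedProduct

variable {α R : Type*} [Ring R] {m : α → α → α} {e : α} {ι : α → α} {f g : α → α → R}

def twistedMul (m : α → α → α) (f g : α → α → R) (M : Type*) [AddCommGroup M] [Module R M]
    (p q : α × M) : α × M :=
  (m p.1 q.1, f p.1 q.1 • p.2 + g p.1 q.1 • q.2)

def twistedInv (e : α) (ι : α → α) (f g : α → α → R) (M : Type*) [AddCommGroup M]
    [Module R M] (p : α × M) : α × M :=
  (ι p.1, -((g (ι p.1) e * f p.1 (ι p.1)) • p.2))

/-- Conditions (0-ii)–(0-iv) on a single group. -/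
def IsTwistCocycle (m : α → α → α) (f g : α → α → R) : Prop :=
  (∀ a b c, f (m a b) c * f a b = f a (m b c)) ∧
  (∀ a b c, f (m a b) c * g a b = g a (m b c) * f b c) ∧
  (∀ a b c, g (m a b) c = g a (m b c) * g b c)

namespace IsTwistCocycle

theorem twistedMul_assoc (hm : ∀ a b c, m (m a b) c = m a (m b c)) (h : IsTwistCocycle m f g)
    {M : Type*} [AddCommGroup M] [Module R M] (p q r : α × M) :
    twistedMul m f g M (twistedMul m f g M p q) r =
      twistedMul m f g M p (twistedMul m f g M q r) := by
  obtain ⟨h₂, h₃, h₄⟩ := h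
  simp only [twistedMul, hm, smul_add, smul_smul, h₂, h₃, h₄, add_assoc]

theorem of_twistedMul_assoc
    (h : ∀ p q r : α × R, twistedMul m f g R (twistedMul m f g R p q) r =
      twistedMul m f g R p (twistedMul m f g R q r)) :
    IsTwistCocycle m f g := by
  have coeff : ∀ a b c (u v w : R),
      f (m a b) c * (f a b * u + g a b * v) + g (m a b) c * w =
        f a (m b c) * u + g a (m b c) * (f b c * v + g b c * w) := fun a b c u v w => by
    simpa only [twistedMul, smul_eq_mul] using congrArg Prod.snd (h (a, u) (b, v) (c, w))
  refine ⟨fun a b c => ?_, fun a b c => ?_, fun a b c => ?_⟩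
  · simpa using coeff a b c 1 0 0
  · simpa using coeff a b c 0 1 0
  · simpa using coeff a b c 0 0 1

theorem fst_eq_one_of_isUnit (hm : ∀ a, m a e = a) (h : IsTwistCocycle m f g) {a : α}
    (hu : IsUnit (f a e)) : f a e = 1 := by
  have idem : f a e * f a e = f a e := by simpa only [hm] using h.1 a e e
  exact (IsIdempotentElem.iff_eq_one_of_isUnit hu).1 idem

theorem snd_eq_one_of_isUnit (hml : ∀ a, m e a = a) (hmr : ∀ a, m a e = a)
    (h : IsTwistCocycle m f g) {a : α} (hu : IsUnit (g a e)) : g e a = 1 := by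
  have hfix : g e a * g a e = g a e := by simpa only [hml, hmr] using (h.2.2 e a e).symm
  exact hu.mul_eq_right.1 hfix

theorem isUnit_fst (hG : GroupAxiomsOn m e ι) (h : IsTwistCocycle m f g)
    (hf : ∀ a, f a e = 1) (a b : α) : IsUnit (f a b) := by
  obtain ⟨hassoc, -, hmr, hinvl, hinvr⟩ := hG
  refine isUnit_iff_exists.2 ⟨f (m a b) (ι b), ?_, ?_⟩
  · simpa only [hassoc, hinvr, hinvl, hmr, hf] using h.1 (m a b) (ι b) b
  · simpa only [hinvr, hf] using h.1 a b (ι b)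

theorem isUnit_snd (hG : GroupAxiomsOn m e ι) (h : IsTwistCocycle m f g)
    (hg : ∀ a, g e a = 1) (a b : α) : IsUnit (g a b) := by
  obtain ⟨hassoc, hml, -, hinvl, hinvr⟩ := hG
  refine isUnit_iff_exists.2 ⟨g (ι a) (m a b), ?_, ?_⟩
  · simpa only [← hassoc, hinvr, hinvl, hml, hg] using (h.2.2 a (ι a) (m a b)).symm
  · simpa only [hinvl, hg] using (h.2.2 (ι a) a b).symm

theorem groupAxiomsOn_twistedMul_of_normalized (hG : GroupAxiomsOn m e ι)
    (h : IsTwistCocycle m f g) (hf : ∀ a, f a e = 1) (hg : ∀ a, g e a = 1)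
    (M : Type*) [AddCommGroup M] [Module R M] :
    GroupAxiomsOn (twistedMul m f g M) (e, 0) (twistedInv e ι f g M) := by
  obtain ⟨hassoc, hml, hmr, hinvl, hinvr⟩ := hG
  have inv_left : ∀ a, f (ι a) a * (g (ι a) e * f a (ι a)) = g (ι a) a := fun a => by
    have hf' : f (ι a) a * f e (ι a) = 1 := by simpa only [hml, hinvl, hf] using h.1 e (ι a) a
    have hfg : f e (ι a) * g (ι a) a = g (ι a) e * f a (ι a) := by
      simpa only [hinvl, hinvr] using h.2.1 (ι a) a (ι a)
    calc f (ι a) a * (g (ι a) e * f a (ι a))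
        = f (ι a) a * (f e (ι a) * g (ι a) a) := by rw [hfg]
      _ = g (ι a) a := by rw [← mul_assoc, hf', one_mul]
  have inv_right : ∀ a, g a (ι a) * g (ι a) e = 1 := fun a => by
    simpa only [hinvr, hmr, hg] using (h.2.2 a (ι a) e).symm
  refine ⟨h.twistedMul_assoc hassoc, ?_, ?_, ?_, ?_⟩ <;> rintro ⟨a, u⟩ <;>
    simp only [twistedMul, twistedInv, Prod.mk.injEq]
  · rw [hml, hg, smul_zero, zero_add, one_smul]; exact ⟨rfl, rfl⟩
  · rw [hmr, hf, smul_zero, add_zero, one_smul]; exact ⟨rfl, rfl⟩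
  · rw [smul_neg, smul_smul, inv_left, neg_add_cancel]; exact ⟨hinvl a, rfl⟩
  · rw [smul_neg, smul_smul, ← mul_assoc, inv_right, one_mul, add_neg_cancel]
    exact ⟨hinvr a, rfl⟩

theorem groupAxiomsOn_twistedMul (hG : GroupAxiomsOn m e ι)
    (hu : ∀ a b, IsUnit (f a b) ∧ IsUnit (g a b)) (h : IsTwistCocycle m f g)
    (M : Type*) [AddCommGroup M] [Module R M] :
    GroupAxiomsOn (twistedMul m f g M) (e, 0) (twistedInv e ι f g M) :=
  h.groupAxiomsOn_twistedMul_of_normalized hG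
    (fun _ => h.fst_eq_one_of_isUnit hG.2.2.1 (hu _ _).1)
    (fun _ => h.snd_eq_one_of_isUnit hG.2.1 hG.2.2.1 (hu _ _).2) M

end IsTwistCocycle

theorem eq_one_of_forall_mul_add_eq {x c : R} (h : ∀ u : R, x * u + c = u) : x = 1 := by
  have hc : c = 0 := by simpa using h 0
  simpa [hc] using h 1

theorem normalized_of_twistedMul_identity (hmr : ∀ a, m a e = a) {o : α × R}
    (hl : ∀ p, twistedMul m f g R o p = p) (hr : ∀ p, twistedMul m f g R p o = p) :
    (∀ a, f a e = 1) ∧ (∀ a, g e a = 1) := by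
  have ho : o.1 = e := (hmr o.1).symm.trans (congrArg Prod.fst (hl (e, 0)))
  refine ⟨fun a => eq_one_of_forall_mul_add_eq (c := g a e * o.2) fun u => ?_,
    fun a => eq_one_of_forall_mul_add_eq (c := f e a * o.2) fun u => ?_⟩
  · simpa only [twistedMul, smul_eq_mul, ho] using congrArg Prod.snd (hr (a, u))
  · simpa only [twistedMul, smul_eq_mul, ho, add_comm] using congrArg Prod.snd (hl (a, u))

theorem isUnit_and_isTwistCocycle_of_groupAxiomsOn (hG : GroupAxiomsOn m e ι) {o : α × R}
    {i : α × R → α × R} (h : GroupAxiomsOn (twistedMul m f g R) o i) :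
    (∀ a b, IsUnit (f a b) ∧ IsUnit (g a b)) ∧ IsTwistCocycle m f g := by
  have hc := IsTwistCocycle.of_twistedMul_assoc h.1
  obtain ⟨hf, hg⟩ := normalized_of_twistedMul_identity hG.2.2.1 h.2.1 h.2.2.1
  exact ⟨fun a b => ⟨hc.isUnit_fst hG hf a b, hc.isUnit_snd hG hg a b⟩, hc⟩

end TwistedProduct

variable {Λ : Type*} {G : Λ → Type*}

theorem IsGroupData.groupAxiomsOn {D : MCQData Λ G} (hD : D.IsGroupData) (l : Λ) :
    GroupAxiomsOn (D.mul l) (D.one l) (D.inv l) :=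
  ⟨hD.1 l, hD.2.1 l, hD.2.2.1 l, hD.2.2.2.1 l, hD.2.2.2.2 l⟩

theorem conds0_iff {R : Type*} [Ring R] {D : MCQData Λ G} {f₃ f₄ : ∀ l, G l → G l → R} :
    Conds0 D f₃ f₄ ↔ ∀ l, (∀ a b, IsUnit (f₃ l a b) ∧ IsUnit (f₄ l a b)) ∧
      IsTwistCocycle (D.mul l) (f₃ l) (f₄ l) :=
  ⟨fun ⟨hu, h₂, h₃, h₄⟩ l => ⟨hu l, h₂ l, h₃ l, h₄ l⟩,
    fun h => ⟨fun l => (h l).1, fun l => (h l).2.1, fun l => (h l).2.2.1, fun l => (h l).2.2.2⟩⟩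

end MCQData

/-- `f₃, f₄` satisfy conditions (0-i)--(0-iv) iff for each `l` and
every left `R`-module `M`, the multiplication `(a,u)(b,v) = (ab, f₃(a,b)u + f₄(a,b)v)`
makes `G l × M` a group; in that case the identity is `(e_λ, 0)` and the inverse of
`(a,u)` is `(a⁻¹, -f₄(a⁻¹,e_λ)f₃(a,a⁻¹)u)`. -/
theorem conds0_iff_group {Λ : Type u} {G : Λ → Type v} {R : Type w} [Ring R]
    (D : MCQData Λ G) (hD : D.IsMCQ) (f₃ f₄ : ∀ l : Λ, G l → G l → R) :
    (MCQData.Conds0 D f₃ f₄ ↔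
      ∀ (l : Λ) (M : Type w) [AddCommGroup M] [Module R M],
        ∃ (o : G l × M) (i : G l × M → G l × M),
          MCQData.GroupAxiomsOn (MCQData.quadMul D f₃ f₄ M l) o i) ∧
    (MCQData.Conds0 D f₃ f₄ →
      ∀ (l : Λ) (M : Type w) [AddCommGroup M] [Module R M],
        MCQData.GroupAxiomsOn (MCQData.quadMul D f₃ f₄ M l)
          ((D.one l, 0) : G l × M)
          (fun p => (D.inv l p.1,
            -((f₄ l (D.inv l p.1) (D.one l) * f₃ l p.1 (D.inv l p.1)) • p.2)))) := by
  have hG := hD.1.groupAxiomsOn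
  have forward (h : MCQData.Conds0 D f₃ f₄) (l : Λ) (M : Type w) [AddCommGroup M]
      [Module R M] :=
    (MCQData.conds0_iff.1 h l).2.groupAxiomsOn_twistedMul (hG l) (MCQData.conds0_iff.1 h l).1 M
  refine ⟨⟨fun h l M _ _ => ⟨_, _, forward h l M⟩, fun h => MCQData.conds0_iff.2 fun l => ?_⟩,
    forward⟩
  obtain ⟨o, i, hgrp⟩ := h l R
  exact MCQData.isUnit_and_isTwistCocycle_of_groupAxiomsOn (hG l) hgrp
end

section
/- Let X = ⨆_{λ∈Λ} G_λ be a multiple conjugation quandle, R a ring, and let f₁, f₂ : X × X → R and f₃, f₄ : ⨆_{λ∈Λ} (G_λ × G_λ) → R be maps satisfying conditions (0-i)–(4-iii). Then for every left R-module M, the set X̃(f₁,f₂,f₃,f₄) = ⨆_{λ∈Λ} (G_λ × M) with operations (x,u) ◁ (y,v) = (x ◁ y, f₁(x,y)u + f₂(x,y)v) and, on each G_λ × M, (a,u)(b,v) = (ab, f₃(a,b)u + f₄(a,b)v), is a multiple conjugation quandle. -/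
universe u v w x u' v'

/-!
Every MCQ axiom for `X̃ = ⨆ (G_λ × M)` splits into its first coordinate, which is the same axiom
for `X`, and its `M`-coordinate, a linear identity in the module elements involved. Comparing
coefficients, each family of conditions gives one axiom: (0-*) the group laws on `G_λ × M`, where
invertibility of `f₃, f₄` forces `f₃(a, e) = f₄(e, a) = 1` and produces the inverse
`(a, u)⁻¹ = (a⁻¹, -f₄(a⁻¹, e) f₃(a, a⁻¹) u)`; (1-*) conjugation on a component; (2-*) the right
action of each `G_λ`; (3-*) self-distributivity; (4-*) the compatibility of `◁` with products.
-/

theorem sigma_mk_prod_congr {ι : Type*} {β : ι → Type*} {M : Type*} {x y : Σ i, β i} {u v : M}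
    (hxy : x = y) (huv : u = v) : (⟨x.1, (x.2, u)⟩ : Σ i, β i × M) = ⟨y.1, (y.2, v)⟩ := by
  subst hxy huv
  rfl

theorem mul_eq_one_comm_of_isUnit {S : Type*} [Monoid S] {u v : S} (hv : IsUnit v)
    (h : u * v = 1) : v * u = 1 := by
  obtain ⟨w, rfl⟩ := hv
  rw [Units.mul_eq_one_iff_eq_inv.mp h, Units.mul_inv]

namespace MCQData

variable {Λ : Type u} {G : Λ → Type v} {R : Type w} [Ring R]

/-- `(a, u)⁻¹ = (a⁻¹, -quadInvCoeff D f₃ f₄ l a • u)` in `quadExt`. -/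
def quadInvCoeff (D : MCQData Λ G) (f₃ f₄ : ∀ l : Λ, G l → G l → R) (l : Λ) (a : G l) : R :=
  f₄ l (D.inv l a) (D.one l) * f₃ l a (D.inv l a)

namespace Conds0

variable {D : MCQData Λ G} {f₃ f₄ : ∀ l : Λ, G l → G l → R}

theorem f₃_one_right (hG : D.IsGroupData) (h0 : Conds0 D f₃ f₄) (l : Λ) (a : G l) :
    f₃ l a (D.one l) = 1 := by
  have h := h0.2.1 l a (D.one l) (D.one l)
  rw [hG.2.2.1, hG.2.2.1] at h
  exact (h0.1 l a (D.one l)).1.mul_eq_right.mp h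

theorem f₄_one_left (hG : D.IsGroupData) (h0 : Conds0 D f₃ f₄) (l : Λ) (a : G l) :
    f₄ l (D.one l) a = 1 := by
  have h := h0.2.2.2 l (D.one l) (D.one l) a
  rw [hG.2.1, hG.2.1] at h
  exact (h0.1 l (D.one l) a).2.mul_eq_right.mp h.symm

theorem f₃_inv_mul_quadInvCoeff (hG : D.IsGroupData) (h0 : Conds0 D f₃ f₄) (l : Λ) (a : G l) :
    f₃ l (D.inv l a) a * quadInvCoeff D f₃ f₄ l a = f₄ l (D.inv l a) a := by
  have hcancel : f₃ l (D.inv l a) a * f₃ l (D.one l) (D.inv l a) = 1 := by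
    refine mul_eq_one_comm_of_isUnit (h0.1 _ _ _).1 ?_
    have h := h0.2.1 l (D.inv l a) a (D.inv l a)
    rwa [hG.2.2.2.1, hG.2.2.2.2, h0.f₃_one_right hG] at h
  have h := h0.2.2.1 l (D.inv l a) a (D.inv l a)
  rw [hG.2.2.2.1, hG.2.2.2.2] at h
  rw [quadInvCoeff, ← h, ← mul_assoc, hcancel, one_mul]

theorem f₄_mul_quadInvCoeff (hG : D.IsGroupData) (h0 : Conds0 D f₃ f₄) (l : Λ) (a : G l) :
    f₄ l a (D.inv l a) * quadInvCoeff D f₃ f₄ l a = f₃ l a (D.inv l a) := by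
  have h := h0.2.2.2 l a (D.inv l a) (D.one l)
  rw [hG.2.2.2.2, hG.2.2.1, h0.f₄_one_left hG] at h
  rw [quadInvCoeff, ← mul_assoc, ← h, one_mul]

end Conds0

section quadExt

variable {D : MCQData Λ G} {f₁ f₂ : (Σ l, G l) → (Σ l, G l) → R}
  {f₃ f₄ : ∀ l : Λ, G l → G l → R} {M : Type x} [AddCommGroup M] [Module R M]

local notation "X̃" => quadExt D f₁ f₂ f₃ f₄ M

theorem isGroupData_quadExt (hG : D.IsGroupData) (h0 : Conds0 D f₃ f₄) : X̃.IsGroupData := by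
  refine ⟨fun l p q r => ?_, fun l p => ?_, fun l p => ?_, fun l p => ?_, fun l p => ?_⟩
  · refine Prod.ext (hG.1 l p.1 q.1 r.1) ?_
    simp only [quadExt, quadMul, smul_add, smul_smul]
    rw [h0.2.1, h0.2.2.1, h0.2.2.2]
    abel
  · refine Prod.ext (hG.2.1 l p.1) ?_
    simp only [quadExt, quadMul, h0.f₄_one_left hG, one_smul, smul_zero, zero_add]
  · refine Prod.ext (hG.2.2.1 l p.1) ?_
    simp only [quadExt, quadMul, h0.f₃_one_right hG, one_smul, smul_zero, add_zero]
  · refine Prod.ext (hG.2.2.2.1 l p.1) ?_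
    change f₃ l (D.inv l p.1) p.1 • -(quadInvCoeff D f₃ f₄ l p.1 • p.2) +
      f₄ l (D.inv l p.1) p.1 • p.2 = 0
    rw [smul_neg, smul_smul, h0.f₃_inv_mul_quadInvCoeff hG, neg_add_cancel]
  · refine Prod.ext (hG.2.2.2.2 l p.1) ?_
    change f₃ l p.1 (D.inv l p.1) • p.2 +
      f₄ l p.1 (D.inv l p.1) • -(quadInvCoeff D f₃ f₄ l p.1 • p.2) = 0
    rw [smul_neg, smul_smul, h0.f₄_mul_quadInvCoeff hG, add_neg_cancel]

theorem quadExt_op_eq_conj (hD : D.IsMCQ) (hc : Conds D f₁ f₂ f₃ f₄) (l : Λ) (p q : G l × M) :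
    X̃.op ⟨l, p⟩ ⟨l, q⟩ = ⟨l, X̃.mul l (X̃.mul l (X̃.inv l q) p) q⟩ := by
  obtain ⟨⟨-, h0ii, h0iii, h0iv⟩, h1i, h1ii, -⟩ := hc
  refine sigma_mk_prod_congr (hD.2.1 l p.1 q.1) ?_
  simp only [quadExt, quadMul, h1i, h1ii, smul_add, smul_neg, smul_smul, add_smul, neg_smul]
  rw [h0iv l (D.inv l q.1) p.1 q.1, ← h0iii l (D.inv l q.1) p.1 q.1,
    ← mul_assoc (f₃ l (D.mul l (D.inv l q.1) p.1) q.1), h0ii l (D.inv l q.1) p.1 q.1,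
    mul_assoc (f₃ l (D.inv l q.1) (D.mul l p.1 q.1))]
  abel

theorem quadExt_op_one (hD : D.IsMCQ) (hc : Conds D f₁ f₂ f₃ f₄) (z : Σ l, G l × M) (l : Λ) :
    X̃.op z ⟨l, X̃.one l⟩ = z := by
  obtain ⟨k, a, u⟩ := z
  refine sigma_mk_prod_congr (y := ⟨k, a⟩) (hD.2.2.1 ⟨k, a⟩ l) ?_
  simp only [quadExt, hc.2.2.2.1, one_smul, smul_zero, add_zero]

theorem quadExt_op_mul (hD : D.IsMCQ) (hc : Conds D f₁ f₂ f₃ f₄) (z : Σ l, G l × M) (l : Λ)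
    (p q : G l × M) : X̃.op z ⟨l, X̃.mul l p q⟩ = X̃.op (X̃.op z ⟨l, p⟩) ⟨l, q⟩ := by
  obtain ⟨-, -, -, -, h2ii, h2iii, h2iv, -⟩ := hc
  obtain ⟨k, c, u⟩ := z
  refine sigma_mk_prod_congr (hD.2.2.2.1 ⟨k, c⟩ l p.1 q.1) ?_
  simp only [quadExt, quadOp, quadMul, Sigma.eta, smul_add, smul_smul]
  rw [h2ii, ← h2iii, ← h2iv]
  abel

theorem quadExt_op_self_distrib (hD : D.IsMCQ) (hc : Conds D f₁ f₂ f₃ f₄)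
    (x y z : Σ l, G l × M) : X̃.op (X̃.op x y) z = X̃.op (X̃.op x z) (X̃.op y z) := by
  obtain ⟨-, -, -, -, -, -, -, h3i, h3ii, h3iii, -⟩ := hc
  obtain ⟨i, a, u⟩ := x
  obtain ⟨j, b, v⟩ := y
  obtain ⟨k, c, w⟩ := z
  refine sigma_mk_prod_congr (hD.2.2.2.2.1 ⟨i, a⟩ ⟨j, b⟩ ⟨k, c⟩) ?_
  simp only [quadExt, quadOp, Sigma.eta, smul_add, smul_smul]
  rw [h3i, h3ii, h3iii ⟨i, a⟩ ⟨j, b⟩ ⟨k, c⟩, add_smul]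
  abel

theorem exists_quadExt_op_mul_left (hD : D.IsMCQ) (hc : Conds D f₁ f₂ f₃ f₄) (l : Λ)
    (p q : G l × M) (z : Σ l, G l × M) :
    ∃ (m : Λ) (p' q' : G m × M), X̃.op ⟨l, p⟩ z = ⟨m, p'⟩ ∧ X̃.op ⟨l, q⟩ z = ⟨m, q'⟩ ∧
      X̃.op ⟨l, X̃.mul l p q⟩ z = ⟨m, X̃.mul m p' q'⟩ := by
  obtain ⟨-, -, -, -, -, -, -, -, -, -, h4i, h4ii, h4iii⟩ := hc
  obtain ⟨k, c, w⟩ := z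
  obtain ⟨m, a', b', ha, hb, hab⟩ := hD.2.2.2.2.2 l p.1 q.1 ⟨k, c⟩
  refine ⟨m, (a', f₁ ⟨l, p.1⟩ ⟨k, c⟩ • p.2 + f₂ ⟨l, p.1⟩ ⟨k, c⟩ • w),
    (b', f₁ ⟨l, q.1⟩ ⟨k, c⟩ • q.2 + f₂ ⟨l, q.1⟩ ⟨k, c⟩ • w),
    sigma_mk_prod_congr ha rfl, sigma_mk_prod_congr hb rfl, sigma_mk_prod_congr hab ?_⟩
  simp only [quadExt, quadMul, smul_add, smul_smul]
  rw [h4i l _ _ _ m a' b' ha hb, h4ii l _ _ _ m a' b' ha hb, h4iii l _ _ _ m a' b' ha hb,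
    add_smul]
  abel

theorem isMCQ_quadExt (hD : D.IsMCQ) (hc : Conds D f₁ f₂ f₃ f₄) : X̃.IsMCQ :=
  ⟨isGroupData_quadExt hD.1 hc.1, quadExt_op_eq_conj hD hc, quadExt_op_one hD hc,
    quadExt_op_mul hD hc, quadExt_op_self_distrib hD hc, exists_quadExt_op_mul_left hD hc⟩

end quadExt

end MCQData

/-- if `(f₁,f₂,f₃,f₄)` satisfies conditions (0-i)--(4-iii), then for
every left `R`-module `M`, the set `X̃(f₁,f₂,f₃,f₄) = ⨆ (G l × M)` with
`(x,u) ◁ (y,v) = (x ◁ y, f₁(x,y)u + f₂(x,y)v)` and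
`(a,u)(b,v) = (ab, f₃(a,b)u + f₄(a,b)v)` is an MCQ. -/
theorem conds_give_mcq {Λ : Type u} {G : Λ → Type v} {R : Type w} [Ring R]
    (D : MCQData Λ G) (hD : D.IsMCQ)
    (f₁ f₂ : (Σ l, G l) → (Σ l, G l) → R) (f₃ f₄ : ∀ l : Λ, G l → G l → R)
    (hc : MCQData.Conds D f₁ f₂ f₃ f₄)
    (M : Type x) [AddCommGroup M] [Module R M] :
    ∃ (o : ∀ l : Λ, G l × M) (i : ∀ l : Λ, G l × M → G l × M),
      (MCQData.mk (MCQData.quadMul D f₃ f₄ M) o i (MCQData.quadOp D f₁ f₂ M) :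
        MCQData Λ fun l => G l × M).IsMCQ := by
  exact ⟨_, _, MCQData.isMCQ_quadExt (M := M) hD hc⟩
end
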